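/- arXiv:math-ph/0212035 — 2 statements merged into one kernel-verified Lean document; each statement's English description precedes it below -/
import Mathlib

section
/- Let W(N) be the number of contact matrices of simple random walks of length N on Z^n, n ≥ 3. Assume that for some constants a, c > 0 and all large N, P(R_N ≤ N^α) ≥ c·exp(−a N^{1−2α/n}) for α ∈ (0,1). Then there exists κ_n > 0 such that for large N, γ_N = ln W(N)/(N ln(2n)) ≥ 1 − κ_n·N^{−2/(n+2)}. In particular γ_N → 1. -/
open Finset

/-- The unit step of a simple walk on `ℤ^n` given a direction `d`. -/
def stepVec (n : ℕ) (d : Fin n × Bool) : Fin n → ℤ :=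
  fun j => if j = d.1 then (if d.2 then 1 else -1) else 0

/-- Position after `i` steps of the walk encoded by the step sequence `s`. -/
def pos {n N : ℕ} (s : Fin N → Fin n × Bool) (i : ℕ) : Fin n → ℤ :=
  ∑ k ∈ Finset.univ.filter (fun k : Fin N => (k : ℕ) < i), stepVec n (s k)

/-- Contact matrix: `1` iff positions at distinct times agree. -/
def cm {n N : ℕ} (s : Fin N → Fin n × Bool) : Fin (N + 1) → Fin (N + 1) → Bool :=
  fun i j => decide ((i : ℕ) ≠ (j : ℕ) ∧ pos s i = pos s j)

/-- Degeneracy: number of walks of length `N` sharing the contact matrix of `s`. -/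
def degC {n N : ℕ} (s : Fin N → Fin n × Bool) : ℕ :=
  (Finset.univ.filter (fun s' : Fin N → Fin n × Bool => cm s' = cm s)).card

/-- Range: number of distinct sites visited. -/
def rangeRW {n N : ℕ} (s : Fin N → Fin n × Bool) : ℕ :=
  (Finset.univ.image (fun i : Fin (N + 1) => pos s (i : ℕ))).card

/-- Number of contact matrices realized by walks of length `N` on `ℤ^n`. -/
def W (n N : ℕ) : ℕ :=
  (Finset.univ.image (fun s : Fin N → Fin n × Bool => cm s)).card

noncomputable def gammaRW (n N : ℕ) : ℝ :=
  Real.log (W n N) / (N * Real.log (2 * n))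

/-- Coarse-grained Shannon entropy of the contact-matrix partition, uniform measure. -/
noncomputable def SC (n N : ℕ) : ℝ :=
  ∑ C : Fin (N + 1) → Fin (N + 1) → Bool,
    Real.negMulLog
      (((Finset.univ.filter (fun s : Fin N → Fin n × Bool => cm s = C)).card : ℝ) / (2 * n) ^ N)

noncomputable def deltaRW (n N : ℕ) : ℝ :=
  SC n N / (N * Real.log (2 * n))

/-- Expected range under the uniform measure. -/
noncomputable def ER (n N : ℕ) : ℝ :=
  (∑ s : Fin N → Fin n × Bool, (rangeRW s : ℝ)) / (2 * n) ^ N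

/-!
A contact matrix determines its walk up to the steps that enter a new site: every other step
returns to a site visited earlier, and the matrix says which one. Since there are fewer such
steps than visited sites, at most `(2n)^r` walks share the contact matrix of a walk with range
at most `r`, so `W(N) ≥ (2n)^{N-r} P(R_N ≤ r)`. Taking `r = N^α` with `α = n/(n+2)`, the
exponent for which `1 - 2α/n = α`, the assumed bound `P(R_N ≤ N^α) ≥ c exp(-a N^α)` gives
`γ_N ≥ 1 - O(N^{α-1}) = 1 - O(N^{-2/(n+2)})`, while `W(N) ≤ (2n)^N` gives `γ_N ≤ 1`.
-/

section Combinatorics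

variable {n N : ℕ}

lemma pos_zero (s : Fin N → Fin n × Bool) : pos s 0 = 0 := by
  simp [pos]

lemma pos_succ (s : Fin N → Fin n × Bool) (i : Fin N) :
    pos s (i + 1) = pos s i + stepVec n (s i) := by
  have hfilter : univ.filter (fun k : Fin N => (k : ℕ) < i + 1)
      = insert i (univ.filter (fun k : Fin N => (k : ℕ) < i)) := by
    ext k
    simp [le_iff_lt_or_eq, Fin.ext_iff, or_comm]
  rw [pos, pos, hfilter, sum_insert (by simp), add_comm]

lemma stepVec_injective : Function.Injective (stepVec n) := by
  rintro ⟨i, b⟩ ⟨j, b'⟩ h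
  have hi := congrFun h i
  by_cases hij : i = j
  · subst hij
    cases b <;> cases b' <;> simp_all [stepVec]
  · cases b <;> simp [stepVec, hij] at hi

def freshSteps (s : Fin N → Fin n × Bool) : Finset (Fin N) :=
  univ.filter fun i => ∀ j ≤ (i : ℕ), pos s (i + 1) ≠ pos s j

lemma card_freshSteps_lt_rangeRW (s : Fin N → Fin n × Bool) :
    #(freshSteps s) < rangeRW s := by
  classical
  set newSites := (freshSteps s).image fun i : Fin N => pos s (i + 1)
  have h0 : pos s 0 ∉ newSites := by
    simp only [newSites, mem_image, not_exists, not_and]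
    intro i hi hpos
    exact (mem_filter.mp hi).2 0 (Nat.zero_le _) hpos
  have hinj : Set.InjOn (fun i : Fin N => pos s (i + 1)) (freshSteps s) := by
    intro i hi i' hi' hpos
    by_contra hne
    rcases lt_or_gt_of_ne (Fin.val_ne_of_ne hne) with hlt | hlt
    · exact (mem_filter.mp hi').2 (i + 1) hlt hpos.symm
    · exact (mem_filter.mp hi).2 (i' + 1) hlt hpos
  have hsub : insert (pos s 0) newSites ⊆ univ.image fun i : Fin (N + 1) => pos s i := by
    intro x hx
    simp only [newSites, mem_insert, mem_image] at hx
    rcases hx with rfl | ⟨i, -, rfl⟩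
    · exact mem_image.mpr ⟨0, mem_univ _, rfl⟩
    · exact mem_image.mpr ⟨i.succ, mem_univ _, rfl⟩
  have hcard := card_le_card hsub
  rwa [card_insert_of_notMem h0, card_image_of_injOn hinj] at hcard

lemma pos_eq_pos_iff_of_cm_eq {s s' : Fin N → Fin n × Bool} (h : cm s' = cm s) {i j : ℕ}
    (hi : i ≤ N) (hj : j ≤ N) (hij : i ≠ j) : pos s' i = pos s' j ↔ pos s i = pos s j := by
  have hc := congrFun (congrFun h ⟨i, Nat.lt_succ_of_le hi⟩) ⟨j, Nat.lt_succ_of_le hj⟩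
  simp only [cm, decide_eq_decide] at hc
  exact ⟨fun hp => (hc.mp ⟨hij, hp⟩).2, fun hp => (hc.mpr ⟨hij, hp⟩).2⟩

lemma pos_eq_of_cm_eq_of_eqOn_freshSteps {s s₁ s₂ : Fin N → Fin n × Bool}
    (h₁ : cm s₁ = cm s) (h₂ : cm s₂ = cm s) (hfresh : ∀ i ∈ freshSteps s, s₁ i = s₂ i) :
    ∀ i ≤ N, pos s₁ i = pos s₂ i := by
  intro i
  induction i using Nat.strong_induction_on with
  | _ i ih =>
    rcases i with _ | m
    · simp [pos_zero]
    intro hm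
    by_cases ht : (⟨m, hm⟩ : Fin N) ∈ freshSteps s
    · rw [pos_succ s₁ ⟨m, hm⟩, pos_succ s₂ ⟨m, hm⟩, ih m m.lt_succ_self (by omega), hfresh _ ht]
    · -- the walk `s` returns at time `m + 1` to a site visited at some time `j ≤ m`,
      -- and the contact matrix forces `s₁` and `s₂` to do the same
      simp only [freshSteps, mem_filter, mem_univ, true_and, not_forall, not_not] at ht
      obtain ⟨j, hj, hpos⟩ := ht
      have hjN : j ≤ N := by omega
      have hne : m + 1 ≠ j := by omega
      rw [(pos_eq_pos_iff_of_cm_eq h₁ hm hjN hne).mpr hpos,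
        (pos_eq_pos_iff_of_cm_eq h₂ hm hjN hne).mpr hpos, ih j (by omega) hjN]

lemma eq_of_cm_eq_of_eqOn_freshSteps {s s₁ s₂ : Fin N → Fin n × Bool}
    (h₁ : cm s₁ = cm s) (h₂ : cm s₂ = cm s) (hfresh : ∀ i ∈ freshSteps s, s₁ i = s₂ i) :
    s₁ = s₂ := by
  have hpos := pos_eq_of_cm_eq_of_eqOn_freshSteps h₁ h₂ hfresh
  funext i
  apply stepVec_injective
  have hstep : ∀ s' : Fin N → Fin n × Bool, stepVec n (s' i) = pos s' (i + 1) - pos s' i :=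
    fun s' => by rw [pos_succ]; abel
  rw [hstep, hstep, hpos i i.isLt.le, hpos (i + 1) i.isLt]

lemma degC_le_pow_card_freshSteps (s : Fin N → Fin n × Bool) :
    degC s ≤ (2 * n) ^ #(freshSteps s) := by
  classical
  calc degC s
      ≤ #(univ : Finset (freshSteps s → Fin n × Bool)) := by
        refine card_le_card_of_injOn (fun s' i => s' i) (fun _ _ => mem_univ _) ?_
        intro s₁ hs₁ s₂ hs₂ heq
        exact eq_of_cm_eq_of_eqOn_freshSteps (mem_filter.mp hs₁).2 (mem_filter.mp hs₂).2
          fun i hi => congrFun heq ⟨i, hi⟩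
    _ = (2 * n) ^ #(freshSteps s) := by simp [mul_comm]

lemma degC_le_pow_rangeRW (hn : 0 < n) (s : Fin N → Fin n × Bool) :
    degC s ≤ (2 * n) ^ rangeRW s :=
  (degC_le_pow_card_freshSteps s).trans
    (Nat.pow_le_pow_right (by omega) (card_freshSteps_lt_rangeRW s).le)

lemma card_rangeRW_le_le_pow_mul_W (hn : 0 < n) (r : ℕ) :
    #(univ.filter fun s : Fin N → Fin n × Bool => rangeRW s ≤ r) ≤ (2 * n) ^ r * W n N := by
  set A := univ.filter fun s : Fin N → Fin n × Bool => rangeRW s ≤ r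
  calc #A ≤ (2 * n) ^ r * #(A.image cm) := by
        refine card_le_mul_card_image A _ fun C hC => ?_
        obtain ⟨s, hsA, rfl⟩ := mem_image.mp hC
        calc #(A.filter fun s' => cm s' = cm s)
            ≤ degC s := card_le_card (filter_subset_filter _ (subset_univ A))
          _ ≤ (2 * n) ^ rangeRW s := degC_le_pow_rangeRW hn s
          _ ≤ (2 * n) ^ r := Nat.pow_le_pow_right (by omega) (mem_filter.mp hsA).2
    _ ≤ (2 * n) ^ r * W n N := Nat.mul_le_mul_left _ (card_le_card (image_subset_image
        (subset_univ A)))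

lemma W_pos (hn : 0 < n) : 0 < W n N := by
  have : Nonempty (Fin n × Bool) := ⟨(⟨0, hn⟩, true)⟩
  exact card_pos.mpr (univ_nonempty.image _)

lemma W_le_pow : W n N ≤ (2 * n) ^ N :=
  card_image_le.trans (by simp [mul_comm])

end Combinatorics

open Real

lemma card_rangeRW_le_real_le_rpow_mul_W {n N : ℕ} (hn : 0 < n) {x : ℝ} (hx : 0 ≤ x) :
    (#(univ.filter fun s : Fin N → Fin n × Bool => (rangeRW s : ℝ) ≤ x) : ℝ)
      ≤ (2 * n : ℝ) ^ x * W n N := by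
  have hfloor : #(univ.filter fun s : Fin N → Fin n × Bool => (rangeRW s : ℝ) ≤ x)
      ≤ (2 * n) ^ ⌊x⌋₊ * W n N :=
    (card_le_card fun s hs => mem_filter.mpr ⟨mem_univ _, Nat.le_floor (mem_filter.mp hs).2⟩).trans
      (card_rangeRW_le_le_pow_mul_W hn _)
  calc _ ≤ (2 * n : ℝ) ^ ⌊x⌋₊ * W n N := by exact_mod_cast hfloor
    _ ≤ (2 * n : ℝ) ^ x * W n N := by
      rw [← rpow_natCast]
      gcongr
      · norm_cast
        omega
      · exact Nat.floor_le hx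

lemma one_sub_mul_div_le_gammaRW {n N : ℕ} (hn : 0 < n) (hN : 0 < N) {a c x : ℝ} (hc : 0 < c)
    (hx : 1 ≤ x) (h : c * exp (-a * x) * (2 * n) ^ N ≤ (2 * n : ℝ) ^ x * W n N) :
    1 - ((a + |log c|) / log (2 * n) + 1) * (x / N) ≤ gammaRW n N := by
  have hL : 0 < log (2 * n : ℝ) := log_pos (by norm_cast; omega)
  have hN' : (0 : ℝ) < N := by exact_mod_cast hN
  have hW : (0 : ℝ) < W n N := by exact_mod_cast W_pos hn
  have hlog : log c - a * x + N * log (2 * n) ≤ x * log (2 * n) + log (W n N) := by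
    have := log_le_log (by positivity) h
    rw [log_mul (by positivity) (by positivity), log_mul hc.ne' (exp_ne_zero _), log_exp,
      log_pow, log_mul (by positivity) hW.ne', log_rpow (by positivity)] at this
    linarith
  have hlogc : -(|log c| * x) ≤ log c := by
    nlinarith [neg_abs_le (log c), abs_nonneg (log c)]
  rw [gammaRW, le_div_iff₀ (by positivity)]
  have hexpand : ((a + |log c|) / log (2 * n) + 1) * (x / N) * (N * log (2 * n))
      = (a + |log c|) * x + x * log (2 * n) := by
    field_simp
  rw [sub_mul, one_mul, hexpand]
  linarith

lemma gammaRW_le_one {n : ℕ} (hn : 0 < n) (N : ℕ) : gammaRW n N ≤ 1 := by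
  rcases N.eq_zero_or_pos with rfl | hN
  · simp [gammaRW]
  have hL : 0 < log (2 * n : ℝ) := log_pos (by norm_cast; omega)
  rw [gammaRW, div_le_one (by positivity), ← log_pow]
  exact log_le_log (by exact_mod_cast W_pos hn) (by exact_mod_cast W_le_pow)

open Filter in
/-- For SRW on `ℤ^n`, `n ≥ 3`: if for some constants `a, c > 0` one has
`P(R_N ≤ N^α) ≥ c exp(-a N^{1-2α/n})` for every `α ∈ (0,1)` and all large `N`,
then there is `κₙ > 0` with `γ_N ≥ 1 - κₙ N^{-2/(n+2)}` for large `N`; in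
particular `γ_N → 1`. -/
theorem gammaRW_lower_bound_high_dim (n : ℕ) (hn : 3 ≤ n)
    (a c : ℝ) (ha : 0 < a) (hc : 0 < c)
    (hP : ∀ α : ℝ, 0 < α → α < 1 → ∀ᶠ N : ℕ in atTop,
      (((Finset.univ.filter
          (fun s : Fin N → Fin n × Bool => (rangeRW s : ℝ) ≤ (N : ℝ) ^ α)).card : ℝ)
            / (2 * n) ^ N)
        ≥ c * Real.exp (-a * (N : ℝ) ^ (1 - 2 * α / n))) :
    (∃ κ : ℝ, 0 < κ ∧ ∀ᶠ N : ℕ in atTop,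
        gammaRW n N ≥ 1 - κ * (N : ℝ) ^ (-(2 : ℝ) / (n + 2))) ∧
      Tendsto (fun N => gammaRW n N) atTop (nhds 1) := by
  have hn0 : 0 < n := by omega
  have hn' : (3 : ℝ) ≤ n := by exact_mod_cast hn
  set α : ℝ := n / (n + 2) with hα
  have hα₀ : 0 < α := by positivity
  have hα₁ : α < 1 := (div_lt_one (by linarith)).mpr (by linarith)
  have hα_exp : 1 - 2 * α / n = α := by rw [hα]; field_simp; ring
  have hα_rate : -(2 : ℝ) / (n + 2) = α - 1 := by rw [hα]; field_simp; ring
  set κ := (a + |Real.log c|) / Real.log (2 * n) + 1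
  have hκ : 0 < κ := by
    have : 0 < Real.log (2 * n) := Real.log_pos (by linarith)
    positivity
  have hbound : ∀ᶠ N : ℕ in atTop, gammaRW n N ≥ 1 - κ * (N : ℝ) ^ (-(2 : ℝ) / (n + 2)) := by
    filter_upwards [hP α hα₀ hα₁, eventually_gt_atTop 0] with N hPN hN
    have hN' : (1 : ℝ) ≤ N := by exact_mod_cast hN
    rw [hα_exp, ge_iff_le, le_div_iff₀ (by positivity)] at hPN
    rw [hα_rate, Real.rpow_sub_one (by positivity)]
    exact one_sub_mul_div_le_gammaRW hn0 hN hc (Real.one_le_rpow hN' hα₀.le)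
      (hPN.trans (card_rangeRW_le_real_le_rpow_mul_W hn0 (by positivity)))
  refine ⟨⟨κ, hκ, hbound⟩, ?_⟩
  have hrate : Tendsto (fun N : ℕ => 1 - κ * (N : ℝ) ^ (-(2 : ℝ) / (n + 2))) atTop (nhds 1) := by
    have h := (tendsto_rpow_neg_atTop (by positivity : (0 : ℝ) < 2 / (n + 2))).comp
      tendsto_natCast_atTop_atTop
    simpa [neg_div, Function.comp_def] using tendsto_const_nhds.sub (h.const_mul κ)
  exact tendsto_of_tendsto_of_tendsto_of_le_of_le' hrate tendsto_const_nhds hbound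
    (Eventually.of_forall (gammaRW_le_one hn0))
end

section
/- For simple random walks on Z^3 of length N, suppose the number P_N of occurrences of a fixed pattern P in the support of the walk satisfies E(P_N) = m₁N + O(√N) with m₁ > 0 and Var(P_N) = O(N ln N), and each occurrence yields an independent contact-matrix-preserving modification so that deg C(ω) ≥ 2^{P_N(ω)}. Then for every ν < m₁ ln 2, P(deg C(ω) ≥ e^{νN}) → 1 as N → ∞, and consequently limsup_{N→∞} δ_N ≤ 1 − (m₁ ln 2)/(2 ln 6) < 1. -/
open Finset

/-!
Summing `negMulLog` over the fibres of the contact map gives `S_C = N ln 6 - E[ln deg C]`, so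
Markov's inequality yields `δ_N ≤ 1 - (ν / ln 6) P(deg C ≥ e^{νN})`. Since `deg C ≥ 2^{P_N}`, this
probability is at least `P(P_N ≥ νN / ln 2)`, which tends to `1` by Chebyshev's inequality as soon
as `ν / ln 2 < m₁`: the mean of `P_N` is `m₁ N + o(N)` and its variance is `o(N²)`. Taking
`ν = m₁ ln 2 / 2` bounds the limsup.
-/

open Filter Asymptotics Topology Real

section UniformProbability

variable {α : Type*} [Fintype α]

noncomputable def unifProb (p : α → Prop) [DecidablePred p] : ℝ :=
  (univ.filter p).card / Fintype.card α

lemma unifProb_nonneg (p : α → Prop) [DecidablePred p] : 0 ≤ unifProb p := by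
  unfold unifProb
  positivity

lemma unifProb_le_one (p : α → Prop) [DecidablePred p] : unifProb p ≤ 1 :=
  div_le_one_of_le₀ (by exact_mod_cast card_filter_le _ _) (Nat.cast_nonneg _)

lemma unifProb_mono {p q : α → Prop} [DecidablePred p] [DecidablePred q]
    (h : ∀ x, p x → q x) : unifProb p ≤ unifProb q :=
  div_le_div_of_nonneg_right
    (by exact_mod_cast card_le_card (monotone_filter_right _ fun x _ => h x)) (Nat.cast_nonneg _)

lemma unifProb_not [Nonempty α] (p : α → Prop) [DecidablePred p] :
    unifProb (fun x => ¬ p x) = 1 - unifProb p := by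
  have hcard : ((univ.filter p).card : ℝ) + (univ.filter (fun x => ¬ p x)).card =
      Fintype.card α := by
    exact_mod_cast card_filter_add_card_filter_not (s := univ) p
  have hpos : (0 : ℝ) < Fintype.card α := by exact_mod_cast Fintype.card_pos
  unfold unifProb
  field_simp
  linarith

lemma mul_unifProb_le_sum_div {f : α → ℝ} (hf : ∀ x, 0 ≤ f x) {p : α → Prop} [DecidablePred p]
    {t : ℝ} (ht : ∀ x, p x → t ≤ f x) :
    t * unifProb p ≤ (∑ x, f x) / Fintype.card α := by
  unfold unifProb
  rw [mul_div_assoc']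
  gcongr
  calc t * (univ.filter p).card = ∑ _x ∈ univ.filter p, t := by
        rw [sum_const, nsmul_eq_mul, mul_comm]
    _ ≤ ∑ x ∈ univ.filter p, f x := sum_le_sum fun x hx => ht x (mem_filter.1 hx).2
    _ ≤ ∑ x, f x := sum_le_sum_of_subset_of_nonneg (filter_subset _ _) fun x _ _ => hf x

end UniformProbability

section Concentration

variable {Ω : ℕ → Type*} [∀ N, Fintype (Ω N)]

theorem tendsto_unifProb_lt_mul_of_isLittleO (X : ∀ N, Ω N → ℝ) (E : ℕ → ℝ) {m m' : ℝ}
    (hm' : m' < m) (hmean : (fun N => E N - m * N) =o[atTop] (fun N => (N : ℝ)))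
    (hvar : (fun N => (∑ ω, (X N ω - E N) ^ 2) / Fintype.card (Ω N))
      =o[atTop] (fun N => (N : ℝ) ^ 2)) :
    Tendsto (fun N => unifProb (fun ω : Ω N => X N ω < m' * N)) atTop (𝓝 0) := by
  set c := m - m'
  have hc : 0 < c := sub_pos.2 hm'
  have hbound : ∀ᶠ N : ℕ in atTop, unifProb (fun ω : Ω N => X N ω < m' * N) ≤
      4 / c ^ 2 * ((∑ ω, (X N ω - E N) ^ 2) / Fintype.card (Ω N) / (N : ℝ) ^ 2) := by
    -- Chebyshev: once `|E N - m N| ≤ c N / 2`, the event forces `|X N - E N| ≥ c N / 2`.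
    filter_upwards [hmean.bound (half_pos hc), eventually_gt_atTop 0] with N hE hN
    have hN' : (0 : ℝ) < N := by exact_mod_cast hN
    rw [Real.norm_eq_abs, Real.norm_natCast] at hE
    have hdev : ∀ ω, X N ω < m' * N → (c / 2 * N) ^ 2 ≤ (X N ω - E N) ^ 2 := by
      intro ω hω
      have hgap : c / 2 * N ≤ E N - X N ω := by linarith [(abs_le.1 hE).1]
      rw [← neg_sub, neg_sq]
      exact pow_le_pow_left₀ (by positivity) hgap 2
    have hmarkov := mul_unifProb_le_sum_div (fun ω => sq_nonneg (X N ω - E N)) hdev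
    calc unifProb (fun ω : Ω N => X N ω < m' * N)
        = (c / 2 * N) ^ 2 * unifProb (fun ω : Ω N => X N ω < m' * N) * (4 / c ^ 2 / N ^ 2) := by
          field_simp
          norm_num
      _ ≤ (∑ ω, (X N ω - E N) ^ 2) / Fintype.card (Ω N) * (4 / c ^ 2 / N ^ 2) := by gcongr
      _ = _ := by ring
  have hlim := hvar.tendsto_div_nhds_zero.const_mul (4 / c ^ 2)
  rw [mul_zero] at hlim
  exact squeeze_zero' (Eventually.of_forall fun N => unifProb_nonneg _) hbound hlim

theorem tendsto_unifProb_exp_le_of_two_pow_le [∀ N, Nonempty (Ω N)] (X : ∀ N, Ω N → ℕ)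
    (D : ∀ N, Ω N → ℝ) (hD : ∀ N ω, (2 : ℝ) ^ X N ω ≤ D N ω) {ν : ℝ}
    (hX : Tendsto (fun N => unifProb (fun ω : Ω N => (X N ω : ℝ) < ν / log 2 * N)) atTop (𝓝 0)) :
    Tendsto (fun N => unifProb (fun ω : Ω N => exp (ν * N) ≤ D N ω)) atTop (𝓝 1) := by
  have hlower : ∀ N, 1 - unifProb (fun ω : Ω N => (X N ω : ℝ) < ν / log 2 * N) ≤
      unifProb (fun ω : Ω N => exp (ν * N) ≤ D N ω) := by
    intro N
    rw [← unifProb_not]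
    refine unifProb_mono fun ω hω => ?_
    rw [not_lt, div_mul_eq_mul_div, div_le_iff₀ (log_pos one_lt_two)] at hω
    calc exp (ν * N) ≤ exp (X N ω * log 2) := exp_le_exp.2 hω
      _ = 2 ^ X N ω := by rw [exp_nat_mul, exp_log two_pos]
      _ ≤ D N ω := hD N ω
  have hlim := (tendsto_const_nhds (x := (1 : ℝ))).sub hX
  rw [sub_zero] at hlim
  exact tendsto_of_tendsto_of_tendsto_of_le_of_le hlim tendsto_const_nhds hlower
    fun N => unifProb_le_one _

end Concentration

lemma isLittleO_natCast_of_le_mul_sqrt {f : ℕ → ℝ} (h : ∃ C, ∀ᶠ N : ℕ in atTop, |f N| ≤ C * √N) :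
    f =o[atTop] (fun N => (N : ℝ)) := by
  obtain ⟨C, hC⟩ := h
  have hsqrt : (fun N : ℕ => √(N : ℝ)) =o[atTop] (fun N => (N : ℝ)) := by
    rw [isLittleO_iff_tendsto fun N hN => by simp [hN]]
    simp_rw [sqrt_div_self', one_div]
    exact tendsto_inv_atTop_zero.comp (tendsto_sqrt_atTop.comp tendsto_natCast_atTop_atTop)
  refine IsBigO.trans_isLittleO (IsBigO.of_bound C ?_) hsqrt
  filter_upwards [hC] with N hN
  rwa [Real.norm_eq_abs, Real.norm_eq_abs, abs_of_nonneg (sqrt_nonneg _)]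

lemma isLittleO_sq_of_le_mul_log {f : ℕ → ℝ} (hf : ∀ N, 0 ≤ f N)
    (h : ∃ C, ∀ᶠ N : ℕ in atTop, f N ≤ C * N * log N) :
    f =o[atTop] (fun N => (N : ℝ) ^ 2) := by
  obtain ⟨C, hC⟩ := h
  have hlog : (fun N : ℕ => (N : ℝ) * log N) =o[atTop] (fun N => (N : ℝ) ^ 2) := by
    simp_rw [sq]
    exact (isBigO_refl _ _).mul_isLittleO
      (isLittleO_log_id_atTop.comp_tendsto tendsto_natCast_atTop_atTop)
  refine IsBigO.trans_isLittleO (IsBigO.of_bound C ?_) hlog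
  filter_upwards [hC, eventually_ge_atTop 1] with N hN hN1
  have hlog0 : 0 ≤ log N := log_natCast_nonneg N
  rw [Real.norm_eq_abs, Real.norm_eq_abs, abs_of_nonneg (hf N),
    abs_of_nonneg (mul_nonneg (Nat.cast_nonneg N) hlog0), ← mul_assoc]
  exact hN

theorem sum_negMulLog_card_fiber_div {α β : Type*} [Fintype α] [Fintype β] [DecidableEq β]
    (f : α → β) :
    ∑ b, negMulLog ((univ.filter (fun a => f a = b)).card / Fintype.card α) =
      log (Fintype.card α) -
        (∑ a, log (univ.filter (fun a' => f a' = f a)).card) / Fintype.card α := by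
  set M : ℝ := (Fintype.card α : ℝ)
  set k : β → ℕ := fun b => (univ.filter (fun a => f a = b)).card
  have hterm : ∀ b, negMulLog (k b / M) = k b / M * log M - k b * log (k b) / M := by
    intro b
    rcases (k b).eq_zero_or_pos with hb | hb
    · simp [hb]
    · have hM : (0 : ℝ) < M := by
        simp only [M]
        exact_mod_cast hb.trans_le ((card_filter_le _ _).trans_eq card_univ)
      rw [negMulLog, log_div (by positivity) hM.ne']
      field_simp
      ring
  have hmass : ∑ b, (k b : ℝ) = M := by
    simp only [M, k]
    exact_mod_cast (card_eq_sum_card_fiberwise fun a _ => mem_univ (f a)).symm.trans card_univ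
  have hfiber : ∑ b, (k b : ℝ) * log (k b) = ∑ a, log (k (f a)) := by
    rw [← sum_fiberwise univ f fun a => log (k (f a))]
    refine sum_congr rfl fun b _ => ?_
    rw [sum_congr rfl fun a ha => by rw [(mem_filter.1 ha).2], sum_const, nsmul_eq_mul]
  have hlogM : ∑ b, (k b : ℝ) / M * log M = log M := by
    rw [← sum_mul, ← sum_div, hmass]
    rcases eq_or_ne M 0 with hM | hM
    · simp [hM]
    · rw [div_self hM, one_mul]
  rw [sum_congr rfl fun b _ => hterm b, sum_sub_distrib, hlogM, ← sum_div, hfiber]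

section Walks

lemma card_walks (n N : ℕ) : (Fintype.card (Fin N → Fin n × Bool) : ℝ) = (2 * n) ^ N := by
  simp [mul_comm]

lemma one_le_degC {n N : ℕ} (s : Fin N → Fin n × Bool) : 1 ≤ degC s :=
  card_pos.2 ⟨s, mem_filter.2 ⟨mem_univ _, rfl⟩⟩

lemma SC_eq (n N : ℕ) :
    SC n N = N * log (2 * n) - (∑ s : Fin N → Fin n × Bool, log (degC s)) / (2 * n) ^ N := by
  rw [SC, ← card_walks, sum_negMulLog_card_fiber_div, card_walks, log_pow]
  rfl

lemma SC_nonneg (n N : ℕ) : 0 ≤ SC n N := by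
  refine sum_nonneg fun C _ =>
    negMulLog_nonneg (by positivity) (div_le_one_of_le₀ ?_ (by positivity))
  rw [← card_walks]
  exact_mod_cast card_filter_le _ _

lemma deltaRW_nonneg (n N : ℕ) : 0 ≤ deltaRW n N := by
  have hlog : 0 ≤ log (2 * n) := by exact_mod_cast log_natCast_nonneg (2 * n)
  exact div_nonneg (SC_nonneg n N) (by positivity)

theorem deltaRW_le_one_sub_mul_unifProb {n N : ℕ} (hn : 0 < n) (hN : 0 < N) (ν : ℝ) :
    deltaRW n N ≤
      1 - ν / log (2 * n) * unifProb (fun s : Fin N → Fin n × Bool => exp (ν * N) ≤ degC s) := by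
  set P := unifProb (fun s : Fin N → Fin n × Bool => exp (ν * N) ≤ degC s)
  have hlog : 0 < log (2 * n) := log_pos (by norm_cast; omega)
  have hL : 0 < N * log (2 * n) := mul_pos (by exact_mod_cast hN) hlog
  have hmarkov : ν * N * P ≤ (∑ s : Fin N → Fin n × Bool, log (degC s)) / (2 * n) ^ N := by
    rw [← card_walks]
    refine mul_unifProb_le_sum_div (fun s => log_natCast_nonneg _) fun s hs => ?_
    exact (le_log_iff_exp_le (by exact_mod_cast one_le_degC s)).2 hs
  have hexpand : (1 - ν / log (2 * n) * P) * (N * log (2 * n)) = N * log (2 * n) - ν * N * P := by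
    field_simp
  rw [deltaRW, SC_eq, div_le_iff₀ hL, hexpand]
  linarith

end Walks

open Filter in
theorem deltaRW_three_limsup_lt_one_general
    (m₁ : ℝ) (hm₁ : 0 < m₁)
    (PN : (N : ℕ) → (Fin N → Fin 3 × Bool) → ℕ)
    (EP : ℕ → ℝ)
    (hmean : ∃ Ce : ℝ, ∀ᶠ N : ℕ in atTop, |EP N - m₁ * N| ≤ Ce * Real.sqrt N)
    (hvar : ∃ Cv : ℝ, ∀ᶠ N : ℕ in atTop,
      (∑ s : Fin N → Fin 3 × Bool, ((PN N s : ℝ) - EP N) ^ 2) / 6 ^ N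
        ≤ Cv * N * Real.log N)
    (hdeg : ∀ N : ℕ, ∀ s : Fin N → Fin 3 × Bool, 2 ^ PN N s ≤ degC s) :
    (∀ ν : ℝ, 0 < ν → ν < m₁ * Real.log 2 →
      Tendsto (fun N : ℕ =>
          (((Finset.univ.filter (fun s : Fin N → Fin 3 × Bool =>
              Real.exp (ν * N) ≤ (degC s : ℝ))).card : ℝ) / 6 ^ N))
        atTop (nhds 1)) ∧
      limsup (fun N : ℕ => deltaRW 3 N) atTop
        ≤ 1 - m₁ * Real.log 2 / (2 * Real.log 6) ∧
      1 - m₁ * Real.log 2 / (2 * Real.log 6) < 1 := by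
  have hcard : ∀ N, (Fintype.card (Fin N → Fin 3 × Bool) : ℝ) = 6 ^ N := fun N => by
    rw [card_walks]; norm_num
  have hprob : ∀ ν, ν < m₁ * log 2 → Tendsto (fun N : ℕ =>
      unifProb (fun s : Fin N → Fin 3 × Bool => exp (ν * N) ≤ degC s)) atTop (𝓝 1) := by
    intro ν hν
    refine tendsto_unifProb_exp_le_of_two_pow_le PN _ (fun N s => by exact_mod_cast hdeg N s) ?_
    refine tendsto_unifProb_lt_mul_of_isLittleO _ EP ((div_lt_iff₀ (log_pos one_lt_two)).2 hν)
      (isLittleO_natCast_of_le_mul_sqrt hmean) ?_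
    simp_rw [hcard]
    exact isLittleO_sq_of_le_mul_log (fun N => by positivity) hvar
  have hgap : 0 < m₁ * log 2 / (2 * log 6) := by
    have := log_pos one_lt_two
    have := log_pos (by norm_num : (1 : ℝ) < 6)
    positivity
  refine ⟨fun ν _ hν => by simpa only [unifProb, hcard] using hprob ν hν, ?_, by linarith⟩
  set ν := m₁ * log 2 / 2
  have hlim : Tendsto (fun N : ℕ => 1 - ν / log 6 *
      unifProb (fun s : Fin N → Fin 3 × Bool => exp (ν * N) ≤ degC s)) atTop
      (𝓝 (1 - m₁ * log 2 / (2 * log 6))) := by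
    have hν := hprob ν (half_lt_self (mul_pos hm₁ (log_pos one_lt_two)))
    convert tendsto_const_nhds.sub (hν.const_mul (ν / log 6)) using 2
    ring
  refine (limsup_le_limsup ?_ (isCoboundedUnder_le_of_le atTop (deltaRW_nonneg 3))
    hlim.isBoundedUnder_le).trans hlim.limsup_eq.le
  filter_upwards [eventually_gt_atTop 0] with N hN
  simpa [show (2 : ℝ) * 3 = 6 by norm_num] using deltaRW_le_one_sub_mul_unifProb three_pos hN ν

open Filter in
/-- For SRW on `ℤ³`: suppose the pattern counts `P_N` satisfy
`E(P_N) = m₁N + O(√N)` with `m₁ > 0`, `Var(P_N) = O(N ln N)`, and each walk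
satisfies `deg C(ω) ≥ 2^{P_N(ω)}`. Then for every `0 < ν < m₁ ln 2`,
`P(deg C ≥ e^{νN}) → 1`, and consequently
`limsup δ_N ≤ 1 - m₁ ln 2/(2 ln 6) < 1`. -/
theorem deltaRW_three_limsup_lt_one
    (m₁ : ℝ) (hm₁ : 0 < m₁)
    (PN : (N : ℕ) → (Fin N → Fin 3 × Bool) → ℕ)
    (EP : ℕ → ℝ)
    (hEP : ∀ N, EP N = (∑ s : Fin N → Fin 3 × Bool, (PN N s : ℝ)) / 6 ^ N)
    (hmean : ∃ Ce : ℝ, ∀ᶠ N : ℕ in atTop, |EP N - m₁ * N| ≤ Ce * Real.sqrt N)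
    (hvar : ∃ Cv : ℝ, ∀ᶠ N : ℕ in atTop,
      (∑ s : Fin N → Fin 3 × Bool, ((PN N s : ℝ) - EP N) ^ 2) / 6 ^ N
        ≤ Cv * N * Real.log N)
    (hdeg : ∀ N : ℕ, ∀ s : Fin N → Fin 3 × Bool, 2 ^ PN N s ≤ degC s) :
    (∀ ν : ℝ, 0 < ν → ν < m₁ * Real.log 2 →
      Tendsto (fun N : ℕ =>
          (((Finset.univ.filter (fun s : Fin N → Fin 3 × Bool =>
              Real.exp (ν * N) ≤ (degC s : ℝ))).card : ℝ) / 6 ^ N))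
        atTop (nhds 1)) ∧
      limsup (fun N : ℕ => deltaRW 3 N) atTop
        ≤ 1 - m₁ * Real.log 2 / (2 * Real.log 6) ∧
      1 - m₁ * Real.log 2 / (2 * Real.log 6) < 1 :=
  deltaRW_three_limsup_lt_one_general m₁ hm₁ PN EP hmean hvar hdeg
end
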